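/- Let γ: [0,T)×[-1,1] → ℝⁿ be a smooth family of immersions, φ = ⟨∂_tγ, ∂_sγ⟩ and V = ∂_tγ − φ∂_sγ. Then for every t ∈ [0,T): d/dt E(γ(t,·)) = ∫_{-1}^{1} ⟨2(∂_s^⊥)²κ + |κ|²κ, V⟩ ds + [ 2⟨κ, ∂_s^⊥V⟩ − 2⟨∂_s^⊥κ, V⟩ + φ|κ|² ]_{x=−1}^{x=1}, where [F]_{x=−1}^{x=1} = F(t,1) − F(t,−1). -/

import Mathlib

open Set MeasureTheory Filter
open scoped RealInnerProductSpace

noncomputable section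

variable {n : ℕ}

/-- Arc-length derivative along the curve `g` of a field `f`. -/
def aderiv {F : Type*} [NormedAddCommGroup F] [NormedSpace ℝ F]
    (g : ℝ → EuclideanSpace ℝ (Fin n)) (f : ℝ → F) : ℝ → F :=
  fun x => ‖deriv g x‖⁻¹ • deriv f x

/-- Unit tangent `∂ₛγ`. -/
def utang (g : ℝ → EuclideanSpace ℝ (Fin n)) : ℝ → EuclideanSpace ℝ (Fin n) :=
  aderiv g g

/-- Normal projection along `g`. -/
def nperp (g f : ℝ → EuclideanSpace ℝ (Fin n)) : ℝ → EuclideanSpace ℝ (Fin n) :=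
  fun x => f x - ⟪f x, utang g x⟫ • utang g x

/-- Curvature vector `κ = ∂ₛ²γ`. -/
def curvV (g : ℝ → EuclideanSpace ℝ (Fin n)) : ℝ → EuclideanSpace ℝ (Fin n) :=
  aderiv g (utang g)

/-- Projected arc-length derivative `∂ₛ^⊥`. -/
def aderivP (g f : ℝ → EuclideanSpace ℝ (Fin n)) : ℝ → EuclideanSpace ℝ (Fin n) :=
  nperp g (aderiv g f)

/-- Iterated projected arc-length derivative `(∂ₛ^⊥)^k`. -/
def aderivPIter (g : ℝ → EuclideanSpace ℝ (Fin n)) :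
    ℕ → (ℝ → EuclideanSpace ℝ (Fin n)) → ℝ → EuclideanSpace ℝ (Fin n)
  | 0, f => f
  | k + 1, f => aderivP g (aderivPIter g k f)

/-- Iterated full arc-length derivative `∂ₛ^k`. -/
def aderivIter (g : ℝ → EuclideanSpace ℝ (Fin n)) :
    ℕ → (ℝ → EuclideanSpace ℝ (Fin n)) → ℝ → EuclideanSpace ℝ (Fin n)
  | 0, f => f
  | k + 1, f => aderiv g (aderivIter g k f)

/-- Elastic energy `E(γ) = ∫ |κ|² ds`. -/
def elE (g : ℝ → EuclideanSpace ℝ (Fin n)) : ℝ :=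
  ∫ x in (-1:ℝ)..1, ‖curvV g x‖ ^ 2 * ‖deriv g x‖

/-- Length `L(γ) = ∫ ds`. -/
def elL (g : ℝ → EuclideanSpace ℝ (Fin n)) : ℝ :=
  ∫ x in (-1:ℝ)..1, ‖deriv g x‖

/-- Energy gradient `∇E(γ) = 2(∂ₛ^⊥)²κ + |κ|²κ`. -/
def gradElE (g : ℝ → EuclideanSpace ℝ (Fin n)) : ℝ → EuclideanSpace ℝ (Fin n) :=
  fun x => (2:ℝ) • aderivPIter g 2 (curvV g) x + ‖curvV g x‖ ^ 2 • curvV g x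

/-- Lagrange multiplier `λ(γ)`. -/
def lagMul (g : ℝ → EuclideanSpace ℝ (Fin n)) : ℝ :=
  (∫ x in (-1:ℝ)..1, ⟪gradElE g x, curvV g x⟫ * ‖deriv g x‖) / elE g

/-- Time derivative `∂ₜγ` of a family. -/
def timeD (γ : ℝ → ℝ → EuclideanSpace ℝ (Fin n)) : ℝ → ℝ → EuclideanSpace ℝ (Fin n) :=
  fun t x => deriv (fun s => γ s x) t

/-- Tangential speed `φ = ⟨∂ₜγ, ∂ₛγ⟩`. -/
def tanSpeed (γ : ℝ → ℝ → EuclideanSpace ℝ (Fin n)) : ℝ → ℝ → ℝ :=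
  fun t x => ⟪timeD γ t x, utang (γ t) x⟫

/-- Normal velocity `V = ∂ₜγ − φ ∂ₛγ`. -/
def normalVel (γ : ℝ → ℝ → EuclideanSpace ℝ (Fin n)) : ℝ → ℝ → EuclideanSpace ℝ (Fin n) :=
  fun t x => timeD γ t x - tanSpeed γ t x • utang (γ t) x

/-- Normal time derivative `∂ₜ^⊥N` of a field along the family γ. -/
def timeDPerp (γ N : ℝ → ℝ → EuclideanSpace ℝ (Fin n)) : ℝ → ℝ → EuclideanSpace ℝ (Fin n) :=
  fun t x => deriv (fun s => N s x) t
    - ⟪deriv (fun s => N s x) t, utang (γ t) x⟫ • utang (γ t) x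

/-- Shape operator `S_p = −Dξ(p)`. -/
def shapeOp (ξ : EuclideanSpace ℝ (Fin n) → EuclideanSpace ℝ (Fin n))
    (p v : EuclideanSpace ℝ (Fin n)) : EuclideanSpace ℝ (Fin n) :=
  -(fderiv ℝ ξ p v)

/-- `L²(ds)` norm of a field along `g`. -/
def l2ds (g f : ℝ → EuclideanSpace ℝ (Fin n)) : ℝ :=
  Real.sqrt (∫ x in (-1:ℝ)..1, ‖f x‖ ^ 2 * ‖deriv g x‖)

/-- Fixed-length free-boundary elastic flow on `[0,T)`. -/
def IsFLFBEF (T : ℝ) (ξ : EuclideanSpace ℝ (Fin n) → EuclideanSpace ℝ (Fin n))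
    (τ : ℝ → ℝ) (γ : ℝ → ℝ → EuclideanSpace ℝ (Fin n)) : Prop :=
  ContDiff ℝ (⊤ : ℕ∞) (fun p : ℝ × ℝ => γ p.1 p.2) ∧
  (∀ t ∈ Ico (0:ℝ) T, ∀ x ∈ Icc (-1:ℝ) 1, deriv (γ t) x ≠ 0) ∧
  (∀ t ∈ Ico (0:ℝ) T, 0 < elE (γ t)) ∧
  (∀ t ∈ Ico (0:ℝ) T, ∀ x ∈ Icc (-1:ℝ) 1,
    timeD γ t x = -(gradElE (γ t) x - lagMul (γ t) • curvV (γ t) x)) ∧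
  (∀ t ∈ Ico (0:ℝ) T, ∀ x ∈ ({-1, 1} : Set ℝ),
    ⟪timeD γ t x, utang (γ t) x⟫ = 0 ∧
    utang (γ t) x = τ x • ξ (γ t x) ∧
    ‖ξ (γ t x)‖ = 1 ∧
    aderivP (γ t) (curvV (γ t)) x = -(τ x • shapeOp ξ (γ t x) (curvV (γ t) x)))

/-!
Differentiating under the integral sign, `d/dt E = ∫ ∂ₜ(|κ|² |∂ₓγ|) dx`. With `p = ∂ₜγ` one has
`∂ₜ|∂ₓγ| = |∂ₓγ| ⟨∂ₛγ, ∂ₛp⟩` and `∂ₜ∂ₛγ = ∂ₛ^⊥p`, so commuting `∂ₜ` with `∂ₓ` gives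
`∂ₜκ = ∂ₛ∂ₛ^⊥p − ⟨∂ₛγ, ∂ₛp⟩ κ`. Splitting `p = V + φ ∂ₛγ` and using that `κ`, `V` and every
`∂ₛ^⊥`-derivative are normal (so that `∂ₛ` may be replaced by `∂ₛ^⊥` against them), the density
`∂ₜ(|κ|² |∂ₓγ|)` becomes `⟨∇E, V⟩ |∂ₓγ|` plus the `x`-derivative of the boundary term, which
integrates to its values at `±1`.
-/

open scoped ContDiff Topology

section PartialDerivatives

variable {F : Type*} [NormedAddCommGroup F] [NormedSpace ℝ F] {f : ℝ × ℝ → F}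
  {U : Set (ℝ × ℝ)} {s y : ℝ}

theorem HasFDerivAt.hasDerivAt_fst {f' : ℝ × ℝ →L[ℝ] F} (hf : HasFDerivAt f f' (s, y)) :
    HasDerivAt (fun u => f (u, y)) (f' (1, 0)) s := by
  simpa [Function.comp_def] using (hf.comp s (hasFDerivAt_prodMk_left s y)).hasDerivAt

theorem HasFDerivAt.hasDerivAt_snd {f' : ℝ × ℝ →L[ℝ] F} (hf : HasFDerivAt f f' (s, y)) :
    HasDerivAt (fun v => f (s, v)) (f' (0, 1)) y := by
  simpa [Function.comp_def] using (hf.comp y (hasFDerivAt_prodMk_right s y)).hasDerivAt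

variable (hU : IsOpen U)
include hU

theorem ContDiffOn.hasFDerivAt_of_isOpen (hf : ContDiffOn ℝ ∞ f U) {q : ℝ × ℝ} (hq : q ∈ U) :
    HasFDerivAt f (fderiv ℝ f q) q :=
  ((hf.differentiableOn (by simp) q hq).differentiableAt (hU.mem_nhds hq)).hasFDerivAt

theorem ContDiffOn.contDiffOn_fderiv_apply (hf : ContDiffOn ℝ ∞ f U) (v : ℝ × ℝ) :
    ContDiffOn ℝ ∞ (fun q => fderiv ℝ f q v) U :=
  (ContinuousLinearMap.apply ℝ F v).contDiff.comp_contDiffOn (hf.fderiv_of_isOpen hU le_rfl)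

theorem ContDiffOn.contDiffOn_deriv_fst (hf : ContDiffOn ℝ ∞ f U) :
    ContDiffOn ℝ ∞ (fun q : ℝ × ℝ => deriv (fun u => f (u, q.2)) q.1) U :=
  (hf.contDiffOn_fderiv_apply hU (1, 0)).congr fun _ hq =>
    (hf.hasFDerivAt_of_isOpen hU hq).hasDerivAt_fst.deriv

theorem ContDiffOn.contDiffOn_deriv_snd (hf : ContDiffOn ℝ ∞ f U) :
    ContDiffOn ℝ ∞ (fun q : ℝ × ℝ => deriv (fun v => f (q.1, v)) q.2) U :=
  (hf.contDiffOn_fderiv_apply hU (0, 1)).congr fun _ hq =>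
    (hf.hasFDerivAt_of_isOpen hU hq).hasDerivAt_snd.deriv

theorem ContDiffOn.hasDerivAt_deriv_snd (hf : ContDiffOn ℝ ∞ f U) (h : (s, y) ∈ U) :
    HasDerivAt (fun u => deriv (fun v => f (u, v)) y)
      (deriv (fun v => deriv (fun u => f (u, v)) s) y) s := by
  have hD : HasFDerivAt (fderiv ℝ f) (fderiv ℝ (fderiv ℝ f) (s, y)) (s, y) :=
    (hf.fderiv_of_isOpen hU (m := ∞) le_rfl).hasFDerivAt_of_isOpen hU h
  have hpartial (w : ℝ × ℝ) : HasFDerivAt (fun q => fderiv ℝ f q w)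
      ((ContinuousLinearMap.apply ℝ F w).comp (fderiv ℝ (fderiv ℝ f) (s, y))) (s, y) :=
    (ContinuousLinearMap.apply ℝ F w).hasFDerivAt.comp (s, y) hD
  have hderiv_snd : (fun u => deriv (fun v => f (u, v)) y) =ᶠ[𝓝 s]
      fun u => fderiv ℝ f (u, y) (0, 1) := by
    filter_upwards [(continuous_id.prodMk continuous_const).continuousAt.preimage_mem_nhds
      (hU.mem_nhds h)] with u hu using (hf.hasFDerivAt_of_isOpen hU hu).hasDerivAt_snd.deriv
  have hderiv_fst : (fun v => deriv (fun u => f (u, v)) s) =ᶠ[𝓝 y]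
      fun v => fderiv ℝ f (s, v) (1, 0) := by
    filter_upwards [(continuous_const.prodMk continuous_id).continuousAt.preimage_mem_nhds
      (hU.mem_nhds h)] with v hv using (hf.hasFDerivAt_of_isOpen hU hv).hasDerivAt_fst.deriv
  rw [hderiv_fst.deriv_eq, (hpartial (1, 0)).hasDerivAt_snd.deriv]
  refine ((hpartial (0, 1)).hasDerivAt_fst.congr_of_eventuallyEq hderiv_snd).congr_deriv ?_
  exact (hf.contDiffAt (hU.mem_nhds h)).isSymmSndFDerivAt
    (by simpa using ENat.LEInfty.out) _ _

end PartialDerivatives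

open Metric in
theorem hasDerivAt_intervalIntegral_of_contDiffOn {F : Type*} [NormedAddCommGroup F]
    [NormedSpace ℝ F] {f : ℝ × ℝ → F} {U : Set (ℝ × ℝ)} (hU : IsOpen U)
    (hf : ContDiffOn ℝ 1 f U) {t a b : ℝ} (ht : ∀ x ∈ uIcc a b, (t, x) ∈ U) :
    HasDerivAt (fun s => ∫ x in a..b, f (s, x)) (∫ x in a..b, deriv (fun s => f (s, x)) t) t := by
  have hsub : {t} ×ˢ uIcc a b ⊆ U := by
    rintro ⟨s, x⟩ ⟨rfl, hx⟩
    exact ht x hx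
  obtain ⟨δ, hδ, hK⟩ :=
    (isCompact_singleton.prod isCompact_uIcc).exists_cthickening_subset_open hU hsub
  set K := cthickening δ ({t} ×ˢ uIcc a b)
  have hmemK : ∀ s ∈ ball t δ, ∀ x ∈ uIcc a b, (s, x) ∈ K := fun s hs x hx =>
    mem_cthickening_of_dist_le _ (t, x) _ _ ⟨rfl, hx⟩ (by
      simpa [Prod.dist_eq] using (mem_ball.mp hs).le)
  have hdiff (q : ℝ × ℝ) (hq : q ∈ U) : HasFDerivAt f (fderiv ℝ f q) q :=
    ((hf.differentiableOn one_ne_zero q hq).differentiableAt (hU.mem_nhds hq)).hasFDerivAt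
  have hderiv_cont : ContinuousOn (fun q : ℝ × ℝ => fderiv ℝ f q (1, 0)) K :=
    ((ContinuousLinearMap.apply ℝ F ((1 : ℝ), (0 : ℝ))).continuous.comp_continuousOn
      (hf.continuousOn_fderiv_of_isOpen hU le_rfl)).mono hK
  obtain ⟨C, hC⟩ :=
    (isCompact_singleton.prod isCompact_uIcc).cthickening.exists_bound_of_continuousOn hderiv_cont
  have hslice (s : ℝ) (hs : s ∈ ball t δ) :
      ContinuousOn (fun x => f (s, x)) (uIcc a b) :=
    hf.continuousOn.comp (continuous_const.prodMk continuous_id).continuousOn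
      fun x hx => hK (hmemK s hs x hx)
  have hball : ball t δ ∈ 𝓝 t := ball_mem_nhds t hδ
  have hmain := intervalIntegral.hasDerivAt_integral_of_dominated_loc_of_deriv_le
    (F := fun s x => f (s, x)) (F' := fun s x => fderiv ℝ f (s, x) (1, 0))
    (bound := fun _ => C) (μ := volume) hball
    (Filter.eventually_of_mem hball fun s hs =>
      ((hslice s hs).mono uIoc_subset_uIcc).aestronglyMeasurable measurableSet_uIoc)
    ((hslice t (mem_ball_self hδ)).intervalIntegrable)
    ((hderiv_cont.comp (continuous_const.prodMk continuous_id).continuousOn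
      fun x hx => hmemK t (mem_ball_self hδ) x (uIoc_subset_uIcc hx)).aestronglyMeasurable
      measurableSet_uIoc)
    (Filter.Eventually.of_forall fun x hx s hs => hC _ (hmemK s hs x (uIoc_subset_uIcc hx)))
    intervalIntegrable_const
    (Filter.Eventually.of_forall fun x hx s hs =>
      (hdiff _ (hK (hmemK s hs x (uIoc_subset_uIcc hx)))).hasDerivAt_fst)
  refine hmain.2.congr_deriv (intervalIntegral.integral_congr fun x hx => ?_)
  exact (hdiff _ (ht x hx)).hasDerivAt_fst.deriv.symm

theorem HasDerivAt.norm_of_ne_zero {E : Type*} [NormedAddCommGroup E] [InnerProductSpace ℝ E]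
    {f : ℝ → E} {f' : E} {x : ℝ} (hf : HasDerivAt f f' x) (h0 : f x ≠ 0) :
    HasDerivAt (fun y => ‖f y‖) ⟪‖f x‖⁻¹ • f x, f'⟫ x := by
  have hsq : (fun y => ‖f y‖) = fun y => Real.sqrt (‖f y‖ ^ 2) := by
    funext y
    rw [Real.sqrt_sq (norm_nonneg _)]
  rw [hsq]
  refine (hf.norm_sq.sqrt (by positivity)).congr_deriv ?_
  rw [Real.sqrt_sq (norm_nonneg _), real_inner_smul_left]
  field_simp

section ArcLength

variable {g : ℝ → EuclideanSpace ℝ (Fin n)} {x : ℝ}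
  {F : Type*} [NormedAddCommGroup F] [NormedSpace ℝ F]

theorem deriv_eq_norm_smul_aderiv (f : ℝ → F) (hx : deriv g x ≠ 0) :
    deriv f x = ‖deriv g x‖ • aderiv g f x := by
  simp [aderiv, smul_smul, hx]

theorem norm_utang (hx : deriv g x ≠ 0) : ‖utang g x‖ = 1 :=
  norm_smul_inv_norm hx

theorem inner_utang_self (hx : deriv g x ≠ 0) : ⟪utang g x, utang g x⟫ = 1 := by
  rw [real_inner_self_eq_norm_sq, norm_utang hx, one_pow]

theorem inner_nperp_utang (f : ℝ → EuclideanSpace ℝ (Fin n)) (hx : deriv g x ≠ 0) :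
    ⟪nperp g f x, utang g x⟫ = 0 := by
  simp [nperp, inner_sub_left, real_inner_smul_left, norm_utang hx]

theorem inner_aderivP_left_of_normal (f : ℝ → EuclideanSpace ℝ (Fin n))
    {v : EuclideanSpace ℝ (Fin n)} (hv : ⟪v, utang g x⟫ = 0) :
    ⟪aderivP g f x, v⟫ = ⟪aderiv g f x, v⟫ := by
  rw [aderivP, nperp, inner_sub_left, real_inner_smul_left, real_inner_comm v (utang g x), hv,
    mul_zero, sub_zero]

theorem inner_aderivP_right_of_normal (f : ℝ → EuclideanSpace ℝ (Fin n))
    {v : EuclideanSpace ℝ (Fin n)} (hv : ⟪v, utang g x⟫ = 0) :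
    ⟪v, aderivP g f x⟫ = ⟪v, aderiv g f x⟫ := by
  rw [real_inner_comm, inner_aderivP_left_of_normal f hv, real_inner_comm]

variable {U : Set ℝ} (hU : IsOpen U) (hreg : ∀ y ∈ U, deriv g y ≠ 0)
include hU hreg

theorem hasDerivAt_norm_smul_aderiv {f : ℝ → F} (hf : ContDiffOn ℝ ∞ f U) (hx : x ∈ U) :
    HasDerivAt f (‖deriv g x‖ • aderiv g f x) x := by
  rw [← deriv_eq_norm_smul_aderiv f (hreg x hx)]
  exact ((hf.differentiableOn (by simp) x hx).differentiableAt (hU.mem_nhds hx)).hasDerivAt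

theorem hasDerivAt_inner_aderiv {N M : ℝ → EuclideanSpace ℝ (Fin n)} (hN : ContDiffOn ℝ ∞ N U)
    (hM : ContDiffOn ℝ ∞ M U) (hx : x ∈ U) :
    HasDerivAt (fun y => ⟪N y, M y⟫)
      (‖deriv g x‖ * (⟪aderiv g N x, M x⟫ + ⟪N x, aderiv g M x⟫)) x := by
  refine ((hasDerivAt_norm_smul_aderiv hU hreg hN hx).inner ℝ
    (hasDerivAt_norm_smul_aderiv hU hreg hM hx)).congr_deriv ?_
  simp only [real_inner_smul_left, real_inner_smul_right]
  ring

theorem inner_aderiv_add_inner_aderiv_eq_zero {N M : ℝ → EuclideanSpace ℝ (Fin n)}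
    (hN : ContDiffOn ℝ ∞ N U) (hM : ContDiffOn ℝ ∞ M U) {c : ℝ}
    (hc : ∀ y ∈ U, ⟪N y, M y⟫ = c) (hx : x ∈ U) :
    ⟪aderiv g N x, M x⟫ + ⟪N x, aderiv g M x⟫ = 0 := by
  have hconst : HasDerivAt (fun y => ⟪N y, M y⟫) 0 x :=
    (hasDerivAt_const x c).congr_of_eventuallyEq (Filter.eventually_of_mem (hU.mem_nhds hx) hc)
  exact (mul_eq_zero.mp ((hasDerivAt_inner_aderiv hU hreg hN hM hx).unique hconst)).resolve_left
    (norm_ne_zero_iff.mpr (hreg x hx))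

theorem hasDerivAt_inner_of_normal {N M : ℝ → EuclideanSpace ℝ (Fin n)}
    (hN : ContDiffOn ℝ ∞ N U) (hM : ContDiffOn ℝ ∞ M U) (hx : x ∈ U)
    (hNx : ⟪N x, utang g x⟫ = 0) (hMx : ⟪M x, utang g x⟫ = 0) :
    HasDerivAt (fun y => ⟪N y, M y⟫)
      (‖deriv g x‖ * (⟪aderivP g N x, M x⟫ + ⟪N x, aderivP g M x⟫)) x := by
  rw [inner_aderivP_left_of_normal N hMx, inner_aderivP_right_of_normal M hNx]
  exact hasDerivAt_inner_aderiv hU hreg hN hM hx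

theorem aderiv_add_smul {V W : ℝ → EuclideanSpace ℝ (Fin n)} {φ : ℝ → ℝ}
    (hV : ContDiffOn ℝ ∞ V U) (hφ : ContDiffOn ℝ ∞ φ U) (hW : ContDiffOn ℝ ∞ W U) (hx : x ∈ U) :
    aderiv g (fun y => V y + φ y • W y) x
      = aderiv g V x + aderiv g φ x • W x + φ x • aderiv g W x := by
  have hℓ : ‖deriv g x‖ ≠ 0 := norm_ne_zero_iff.mpr (hreg x hx)
  have hsum : HasDerivAt (fun y => V y + φ y • W y) _ x :=
    (hasDerivAt_norm_smul_aderiv hU hreg hV hx).add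
      ((hasDerivAt_norm_smul_aderiv hU hreg hφ hx).smul (hasDerivAt_norm_smul_aderiv hU hreg hW hx))
  apply smul_right_injective _ hℓ
  simp only
  rw [← deriv_eq_norm_smul_aderiv _ (hreg x hx), hsum.deriv]
  simp only [smul_eq_mul, smul_add, smul_smul, mul_comm]
  abel

variable (hg : ContDiffOn ℝ ∞ g U)
include hg

theorem contDiffOn_aderiv {f : ℝ → F} (hf : ContDiffOn ℝ ∞ f U) :
    ContDiffOn ℝ ∞ (aderiv g f) U :=
  (((hg.deriv_of_isOpen hU (m := ∞) le_rfl).norm ℝ hreg).inv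
    fun y hy => norm_ne_zero_iff.mpr (hreg y hy)).smul (hf.deriv_of_isOpen hU (m := ∞) le_rfl)

theorem contDiffOn_utang : ContDiffOn ℝ ∞ (utang g) U :=
  contDiffOn_aderiv hU hreg hg hg

theorem contDiffOn_curvV : ContDiffOn ℝ ∞ (curvV g) U :=
  contDiffOn_aderiv hU hreg hg (contDiffOn_utang hU hreg hg)

theorem contDiffOn_nperp {f : ℝ → EuclideanSpace ℝ (Fin n)} (hf : ContDiffOn ℝ ∞ f U) :
    ContDiffOn ℝ ∞ (nperp g f) U :=
  hf.sub ((hf.inner ℝ (contDiffOn_utang hU hreg hg)).smul (contDiffOn_utang hU hreg hg))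

theorem contDiffOn_aderivP {f : ℝ → EuclideanSpace ℝ (Fin n)} (hf : ContDiffOn ℝ ∞ f U) :
    ContDiffOn ℝ ∞ (aderivP g f) U :=
  contDiffOn_nperp hU hreg hg (contDiffOn_aderiv hU hreg hg hf)

theorem inner_curvV_utang (hx : x ∈ U) : ⟪curvV g x, utang g x⟫ = 0 := by
  have h := inner_aderiv_add_inner_aderiv_eq_zero hU hreg (contDiffOn_utang hU hreg hg)
    (contDiffOn_utang hU hreg hg) (fun y hy => inner_utang_self (hreg y hy)) hx
  change ⟪curvV g x, utang g x⟫ + ⟪utang g x, curvV g x⟫ = 0 at h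
  rw [real_inner_comm (curvV g x) (utang g x)] at h
  exact add_self_eq_zero.mp h

theorem inner_aderiv_utang_of_normal {N : ℝ → EuclideanSpace ℝ (Fin n)} (hN : ContDiffOn ℝ ∞ N U)
    (hperp : ∀ y ∈ U, ⟪N y, utang g y⟫ = 0) (hx : x ∈ U) :
    ⟪aderiv g N x, utang g x⟫ = -⟪N x, curvV g x⟫ :=
  eq_neg_of_add_eq_zero_left
    (inner_aderiv_add_inner_aderiv_eq_zero hU hreg hN (contDiffOn_utang hU hreg hg) hperp hx)

theorem aderivP_add_smul_utang {V : ℝ → EuclideanSpace ℝ (Fin n)} {φ : ℝ → ℝ}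
    (hV : ContDiffOn ℝ ∞ V U) (hφ : ContDiffOn ℝ ∞ φ U) (hx : x ∈ U) :
    aderivP g (fun y => V y + φ y • utang g y) x = aderivP g V x + φ x • curvV g x := by
  have hκ : ⟪aderiv g (utang g) x, utang g x⟫ = 0 := inner_curvV_utang hU hreg hg hx
  simp only [aderivP, nperp]
  rw [aderiv_add_smul hU hreg hV hφ (contDiffOn_utang hU hreg hg) hx]
  simp only [inner_add_left, real_inner_smul_left, inner_utang_self (hreg x hx), hκ, curvV,
    add_smul, mul_zero, mul_one, add_zero]
  abel

end ArcLength

def elasticBoundaryTerm (g V : ℝ → EuclideanSpace ℝ (Fin n)) (φ : ℝ → ℝ) (y : ℝ) : ℝ :=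
  2 * ⟪curvV g y, aderivP g V y⟫ - 2 * ⟪aderivP g (curvV g) y, V y⟫ + φ y * ‖curvV g y‖ ^ 2

section FirstVariation

variable {g : ℝ → EuclideanSpace ℝ (Fin n)} {x : ℝ} {U : Set ℝ} (hU : IsOpen U)
  (hreg : ∀ y ∈ U, deriv g y ≠ 0) (hg : ContDiffOn ℝ ∞ g U)
include hU hreg hg

theorem contDiffOn_gradElE : ContDiffOn ℝ ∞ (gradElE g) U := by
  have hκ := contDiffOn_curvV hU hreg hg
  exact ((contDiffOn_aderivP hU hreg hg (contDiffOn_aderivP hU hreg hg hκ)).const_smul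
    (2 : ℝ)).add ((hκ.norm_sq ℝ).smul hκ)

theorem hasDerivAt_elasticBoundaryTerm {V : ℝ → EuclideanSpace ℝ (Fin n)} {φ : ℝ → ℝ}
    (hV : ContDiffOn ℝ ∞ V U) (hφ : ContDiffOn ℝ ∞ φ U) (hx : x ∈ U)
    (hVx : ⟪V x, utang g x⟫ = 0) :
    HasDerivAt (elasticBoundaryTerm g V φ)
      (‖deriv g x‖ * (2 * ⟪curvV g x, aderivP g (aderivP g V) x⟫
        - 2 * ⟪aderivP g (aderivP g (curvV g)) x, V x⟫ + aderiv g φ x * ‖curvV g x‖ ^ 2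
        + 2 * φ x * ⟪curvV g x, aderivP g (curvV g) x⟫)) x := by
  have hκ := contDiffOn_curvV hU hreg hg
  have hκx := inner_curvV_utang hU hreg hg hx
  have hsq : (fun y => ‖curvV g y‖ ^ 2) = fun y => ⟪curvV g y, curvV g y⟫ := by
    simp only [real_inner_self_eq_norm_sq]
  have hκV := hasDerivAt_inner_of_normal hU hreg hκ (contDiffOn_aderivP hU hreg hg hV) hx hκx
    (inner_nperp_utang _ (hreg x hx))
  have hκ'V := hasDerivAt_inner_of_normal hU hreg (contDiffOn_aderivP hU hreg hg hκ) hV hx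
    (inner_nperp_utang _ (hreg x hx)) hVx
  have hκκ := hasDerivAt_inner_of_normal hU hreg hκ hκ hx hκx hκx
  rw [← hsq] at hκκ
  have hφκ := (hasDerivAt_norm_smul_aderiv hU hreg hφ hx).mul hκκ
  refine (((hκV.const_mul 2).sub (hκ'V.const_mul 2)).add hφκ).congr_deriv ?_
  rw [real_inner_comm (curvV g x) (aderivP g (curvV g) x)]
  simp only [smul_eq_mul]
  ring

theorem hasDerivAt_elasticBoundaryTerm_nperp {p : ℝ → EuclideanSpace ℝ (Fin n)}
    (hp : ContDiffOn ℝ ∞ p U) (hx : x ∈ U) :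
    HasDerivAt (elasticBoundaryTerm g (nperp g p) (fun y => ⟪p y, utang g y⟫))
      (‖deriv g x‖ * (2 * ⟪curvV g x, aderiv g (aderivP g p) x⟫
          - ‖curvV g x‖ ^ 2 * ⟪utang g x, aderiv g p x⟫)
        - ⟪gradElE g x, nperp g p x⟫ * ‖deriv g x‖) x := by
  set V := nperp g p
  set φ := fun y => ⟪p y, utang g y⟫
  have hT := contDiffOn_utang hU hreg hg
  have hκ := contDiffOn_curvV hU hreg hg
  have hφ : ContDiffOn ℝ ∞ φ U := hp.inner ℝ hT
  have hV : ContDiffOn ℝ ∞ V U := contDiffOn_nperp hU hreg hg hp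
  have hκx := inner_curvV_utang hU hreg hg hx
  have hdecomp : p = fun y => V y + φ y • utang g y := by
    funext y
    simp [V, φ, nperp]
  have hderivP : aderivP g p =ᶠ[𝓝 x] fun y => aderivP g V y + φ y • curvV g y :=
    Filter.eventually_of_mem (hU.mem_nhds hx) fun y hy =>
      (congrArg (aderivP g · y) hdecomp).trans (aderivP_add_smul_utang hU hreg hg hV hφ hy)
  have hcurv : ⟪curvV g x, aderiv g (aderivP g p) x⟫ = ⟪curvV g x, aderivP g (aderivP g V) x⟫
      + aderiv g φ x * ‖curvV g x‖ ^ 2 + φ x * ⟪curvV g x, aderivP g (curvV g) x⟫ := by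
    have h : aderiv g (aderivP g p) x = aderiv g (fun y => aderivP g V y + φ y • curvV g y) x := by
      simp only [aderiv, hderivP.deriv_eq]
    rw [h, aderiv_add_smul hU hreg (contDiffOn_aderivP hU hreg hg hV) hφ hκ hx]
    simp only [inner_add_right, real_inner_smul_right, real_inner_self_eq_norm_sq]
    rw [inner_aderivP_right_of_normal _ hκx, inner_aderivP_right_of_normal _ hκx]
  have htang : ⟪utang g x, aderiv g p x⟫ = aderiv g φ x - ⟪V x, curvV g x⟫ := by
    rw [congrArg (aderiv g · x) hdecomp, aderiv_add_smul hU hreg hV hφ hT hx]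
    have hTκ : ⟪utang g x, aderiv g (utang g) x⟫ = 0 := by rw [real_inner_comm]; exact hκx
    simp only [inner_add_right, real_inner_smul_right, inner_utang_self (hreg x hx), hTκ]
    rw [real_inner_comm, inner_aderiv_utang_of_normal hU hreg hg hV
      (fun y hy => inner_nperp_utang p (hreg y hy)) hx]
    ring
  refine (hasDerivAt_elasticBoundaryTerm hU hreg hg hV hφ hx
    (inner_nperp_utang p (hreg x hx))).congr_deriv ?_
  rw [hcurv, htang]
  simp only [gradElE, aderivPIter, inner_add_left, real_inner_smul_left]
  rw [real_inner_comm (curvV g x) (V x)]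
  ring

end FirstVariation

def regularPoints (γ : ℝ → ℝ → EuclideanSpace ℝ (Fin n)) : Set (ℝ × ℝ) :=
  {q | deriv (γ q.1) q.2 ≠ 0}

section Family

variable {F : Type*} [NormedAddCommGroup F] [NormedSpace ℝ F]
  {γ : ℝ → ℝ → EuclideanSpace ℝ (Fin n)} (hγ : ContDiff ℝ ∞ (fun q : ℝ × ℝ => γ q.1 q.2))
include hγ

theorem contDiff_deriv_family : ContDiff ℝ ∞ (fun q : ℝ × ℝ => deriv (γ q.1) q.2) :=
  contDiffOn_univ.mp (hγ.contDiffOn.contDiffOn_deriv_snd isOpen_univ)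

theorem contDiff_timeD : ContDiff ℝ ∞ (fun q : ℝ × ℝ => timeD γ q.1 q.2) :=
  contDiffOn_univ.mp (hγ.contDiffOn.contDiffOn_deriv_fst isOpen_univ)

theorem isOpen_regularPoints : IsOpen (regularPoints γ) :=
  isOpen_compl_singleton.preimage (contDiff_deriv_family hγ).continuous

theorem contDiffOn_aderiv_family {N : ℝ → ℝ → F}
    (hN : ContDiffOn ℝ ∞ (fun q : ℝ × ℝ => N q.1 q.2) (regularPoints γ)) :
    ContDiffOn ℝ ∞ (fun q : ℝ × ℝ => aderiv (γ q.1) (N q.1) q.2) (regularPoints γ) :=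
  (((contDiff_deriv_family hγ).contDiffOn.norm ℝ fun _ hq => hq).inv
    fun _ hq => norm_ne_zero_iff.mpr hq).smul (hN.contDiffOn_deriv_snd (isOpen_regularPoints hγ))

theorem contDiffOn_utang_family :
    ContDiffOn ℝ ∞ (fun q : ℝ × ℝ => utang (γ q.1) q.2) (regularPoints γ) :=
  contDiffOn_aderiv_family hγ hγ.contDiffOn

theorem contDiffOn_curvV_family :
    ContDiffOn ℝ ∞ (fun q : ℝ × ℝ => curvV (γ q.1) q.2) (regularPoints γ) :=
  contDiffOn_aderiv_family hγ (N := fun s => utang (γ s)) (contDiffOn_utang_family hγ)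

variable {t x : ℝ}

theorem hasDerivAt_deriv_family :
    HasDerivAt (fun s => deriv (γ s) x) (deriv (timeD γ t) x) t :=
  hγ.contDiffOn.hasDerivAt_deriv_snd isOpen_univ (mem_univ (t, x))

theorem hasDerivAt_norm_deriv_family (hx : deriv (γ t) x ≠ 0) :
    HasDerivAt (fun s => ‖deriv (γ s) x‖)
      (‖deriv (γ t) x‖ * ⟪utang (γ t) x, aderiv (γ t) (timeD γ t) x⟫) t := by
  refine ((hasDerivAt_deriv_family hγ).norm_of_ne_zero hx).congr_deriv ?_
  rw [deriv_eq_norm_smul_aderiv (timeD γ t) hx, real_inner_smul_right]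
  rfl

theorem hasDerivAt_utang_family (hx : deriv (γ t) x ≠ 0) :
    HasDerivAt (fun s => utang (γ s) x) (aderivP (γ t) (timeD γ t) x) t := by
  have hℓ : ‖deriv (γ t) x‖ ≠ 0 := norm_ne_zero_iff.mpr hx
  refine (((hasDerivAt_norm_deriv_family hγ hx).inv hℓ).smul
    (hasDerivAt_deriv_family hγ)).congr_deriv ?_
  rw [deriv_eq_norm_smul_aderiv (timeD γ t) hx]
  simp only [aderivP, nperp, utang, aderiv, real_inner_smul_left, real_inner_smul_right, smul_smul]
  rw [Pi.inv_apply, mul_inv_cancel₀ hℓ, mul_one, sub_eq_add_neg, ← neg_smul,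
    real_inner_comm (deriv (γ t) x)]
  congr 2
  field_simp

theorem hasDerivAt_curvV_family (hx : (t, x) ∈ regularPoints γ) :
    HasDerivAt (fun s => curvV (γ s) x)
      (aderiv (γ t) (aderivP (γ t) (timeD γ t)) x
        - ⟪utang (γ t) x, aderiv (γ t) (timeD γ t) x⟫ • curvV (γ t) x) t := by
  have hx' : deriv (γ t) x ≠ 0 := hx
  have hℓ : ‖deriv (γ t) x‖ ≠ 0 := norm_ne_zero_iff.mpr hx'
  have hmixed : HasDerivAt (fun s => deriv (utang (γ s)) x)
      (deriv (aderivP (γ t) (timeD γ t)) x) t := by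
    refine ((contDiffOn_utang_family hγ).hasDerivAt_deriv_snd (isOpen_regularPoints hγ)
      hx).congr_deriv (Filter.EventuallyEq.deriv_eq ?_)
    filter_upwards [(continuous_const.prodMk continuous_id).continuousAt.preimage_mem_nhds
      ((isOpen_regularPoints hγ).mem_nhds hx)] with v hv
    exact (hasDerivAt_utang_family hγ hv).deriv
  refine (((hasDerivAt_norm_deriv_family hγ hx').inv hℓ).smul hmixed).congr_deriv ?_
  rw [deriv_eq_norm_smul_aderiv (aderivP (γ t) (timeD γ t)) hx', Pi.inv_apply, smul_smul,
    inv_mul_cancel₀ hℓ, one_smul, sub_eq_add_neg, ← neg_smul]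
  simp only [curvV, aderiv, smul_smul]
  congr 2
  field_simp

theorem hasDerivAt_energyDensity_family (hx : (t, x) ∈ regularPoints γ) :
    HasDerivAt (fun s => ‖curvV (γ s) x‖ ^ 2 * ‖deriv (γ s) x‖)
      (‖deriv (γ t) x‖ * (2 * ⟪curvV (γ t) x, aderiv (γ t) (aderivP (γ t) (timeD γ t)) x⟫
        - ‖curvV (γ t) x‖ ^ 2 * ⟪utang (γ t) x, aderiv (γ t) (timeD γ t) x⟫)) t := by
  refine ((hasDerivAt_curvV_family hγ hx).norm_sq.mul
    (hasDerivAt_norm_deriv_family hγ hx)).congr_deriv ?_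
  rw [inner_sub_right, real_inner_smul_right, real_inner_self_eq_norm_sq]
  ring

theorem hasDerivAt_elE_family (hreg : ∀ x ∈ Icc (-1 : ℝ) 1, deriv (γ t) x ≠ 0) :
    HasDerivAt (fun s => elE (γ s))
      ((∫ x in (-1 : ℝ)..1, ⟪gradElE (γ t) x, normalVel γ t x⟫ * ‖deriv (γ t) x‖)
        + (elasticBoundaryTerm (γ t) (normalVel γ t) (tanSpeed γ t) 1
          - elasticBoundaryTerm (γ t) (normalVel γ t) (tanSpeed γ t) (-1))) t := by
  have hslice : Continuous fun y : ℝ => (t, y) := continuous_const.prodMk continuous_id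
  set U := {y | deriv (γ t) y ≠ 0}
  have hU : IsOpen U :=
    isOpen_compl_singleton.preimage ((contDiff_deriv_family hγ).continuous.comp hslice)
  have hg : ContDiffOn ℝ ∞ (γ t) U := (hγ.comp (contDiff_const.prodMk contDiff_id)).contDiffOn
  have hp : ContDiffOn ℝ ∞ (timeD γ t) U :=
    ((contDiff_timeD hγ).comp (contDiff_const.prodMk contDiff_id)).contDiffOn
  have hIcc : uIcc (-1 : ℝ) 1 ⊆ U := by
    rw [uIcc_of_le (by norm_num)]
    exact hreg
  have he : ContDiffOn ℝ ∞ (fun q : ℝ × ℝ => ‖curvV (γ q.1) q.2‖ ^ 2 * ‖deriv (γ q.1) q.2‖)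
      (regularPoints γ) :=
    ((contDiffOn_curvV_family hγ).norm_sq ℝ).mul
      ((contDiff_deriv_family hγ).contDiffOn.norm ℝ fun _ hq => hq)
  set R := fun x => deriv (fun s => ‖curvV (γ s) x‖ ^ 2 * ‖deriv (γ s) x‖) t
  set G := fun x => ⟪gradElE (γ t) x, normalVel γ t x⟫ * ‖deriv (γ t) x‖
  have hR : IntervalIntegrable R volume (-1) 1 :=
    ((he.contDiffOn_deriv_fst (isOpen_regularPoints hγ)).continuousOn.comp hslice.continuousOn
      fun x hx => hIcc hx).intervalIntegrable
  have hG : IntervalIntegrable G volume (-1) 1 :=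
    ((((contDiffOn_gradElE hU (fun _ hy => hy) hg).inner ℝ
      (contDiffOn_nperp hU (fun _ hy => hy) hg hp)).mul
      (hg.deriv_of_isOpen hU (m := ∞) le_rfl |>.norm ℝ fun _ hy => hy)).continuousOn.mono
      hIcc).intervalIntegrable
  have hB (x : ℝ) (hx : x ∈ uIcc (-1 : ℝ) 1) :
      HasDerivAt (elasticBoundaryTerm (γ t) (normalVel γ t) (tanSpeed γ t)) (R x - G x) x := by
    simp only [R, G, (hasDerivAt_energyDensity_family hγ (hIcc hx)).deriv]
    exact hasDerivAt_elasticBoundaryTerm_nperp hU (fun _ hy => hy) hg hp (hIcc hx)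
  refine (hasDerivAt_intervalIntegral_of_contDiffOn (isOpen_regularPoints hγ)
    (he.of_le (by simp)) fun x hx => hIcc hx).congr_deriv ?_
  rw [← intervalIntegral.integral_eq_sub_of_hasDerivAt hB (hR.sub hG),
    intervalIntegral.integral_sub hR hG]
  ring

end Family

theorem statement1_general
    (n : ℕ) (T : ℝ)
    (γ : ℝ → ℝ → EuclideanSpace ℝ (Fin n))
    (hγ : ContDiff ℝ (⊤ : ℕ∞) (fun p : ℝ × ℝ => γ p.1 p.2))
    (himm : ∀ t ∈ Ico (0:ℝ) T, ∀ x ∈ Icc (-1:ℝ) 1, deriv (γ t) x ≠ 0) :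
    ∀ t ∈ Ico (0:ℝ) T,
      deriv (fun s => elE (γ s)) t
        = (∫ x in (-1:ℝ)..1,
            ⟪(2:ℝ) • aderivPIter (γ t) 2 (curvV (γ t)) x
                + ‖curvV (γ t) x‖ ^ 2 • curvV (γ t) x,
              normalVel γ t x⟫ * ‖deriv (γ t) x‖)
          + ((2 * ⟪curvV (γ t) 1, aderivP (γ t) (normalVel γ t) 1⟫
                - 2 * ⟪aderivP (γ t) (curvV (γ t)) 1, normalVel γ t 1⟫
                + tanSpeed γ t 1 * ‖curvV (γ t) 1‖ ^ 2)
              - (2 * ⟪curvV (γ t) (-1), aderivP (γ t) (normalVel γ t) (-1)⟫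
                - 2 * ⟪aderivP (γ t) (curvV (γ t)) (-1), normalVel γ t (-1)⟫
                + tanSpeed γ t (-1) * ‖curvV (γ t) (-1)‖ ^ 2)) :=
  fun t ht => (hasDerivAt_elE_family hγ (himm t ht)).deriv

/-- first variation of the elastic energy along a family of immersions. -/
theorem statement1
    (n : ℕ) (hn : 2 ≤ n) (T : ℝ) (hT : 0 < T)
    (γ : ℝ → ℝ → EuclideanSpace ℝ (Fin n))
    (hγ : ContDiff ℝ (⊤ : ℕ∞) (fun p : ℝ × ℝ => γ p.1 p.2))
    (himm : ∀ t ∈ Ico (0:ℝ) T, ∀ x ∈ Icc (-1:ℝ) 1, deriv (γ t) x ≠ 0) :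
    ∀ t ∈ Ico (0:ℝ) T,
      deriv (fun s => elE (γ s)) t
        = (∫ x in (-1:ℝ)..1,
            ⟪(2:ℝ) • aderivPIter (γ t) 2 (curvV (γ t)) x
                + ‖curvV (γ t) x‖ ^ 2 • curvV (γ t) x,
              normalVel γ t x⟫ * ‖deriv (γ t) x‖)
          + ((2 * ⟪curvV (γ t) 1, aderivP (γ t) (normalVel γ t) 1⟫
                - 2 * ⟪aderivP (γ t) (curvV (γ t)) 1, normalVel γ t 1⟫
                + tanSpeed γ t 1 * ‖curvV (γ t) 1‖ ^ 2)
              - (2 * ⟪curvV (γ t) (-1), aderivP (γ t) (normalVel γ t) (-1)⟫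
                - 2 * ⟪aderivP (γ t) (curvV (γ t)) (-1), normalVel γ t (-1)⟫
                + tanSpeed γ t (-1) * ‖curvV (γ t) (-1)‖ ^ 2)) :=
  statement1_general n T γ hγ himm

end
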